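/- arXiv:0806.3297 — 2 statements merged into one kernel-verified Lean document; each statement's English description precedes it below -/
import Mathlib

section
/- Let Q ⊂ ℂ be a convex open set, φ : Q → ℂ analytic with |φ'(z) + 1| ≤ ε < 1/2 on Q, and e ∈ Q with φ(e) = 0. Then for every z ∈ Q with Re(z − e) < 0 and |Im(z − e)| ≤ |Re(z − e)|, one has Re φ(z) ≥ (1 − 2ε)|Re(z − e)| > 0; in particular φ(z) ∉ −S where S = {w ∈ ℂ : Re w ≥ 0, |Im w| ≤ (1/3) Re w}. -/
/-! Since `φ' + 1` is small, `φ` is close to the map `z ↦ -(z - e)`: the mean value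
inequality for `φ(z) + (z - e)` gives `|φ(z) + (z - e)| ≤ ε |z - e|`. In the cone
`|Im(z - e)| ≤ |Re(z - e)|` one has `|z - e| ≤ 2 |Re(z - e)|`, so the real part of `φ(z)`
stays within `2ε |Re(z - e)|` of `-Re(z - e) = |Re(z - e)|`. -/

theorem Convex.norm_sub_add_sub_le_of_norm_deriv_add_one_le {𝕜 : Type*} [RCLike 𝕜]
    {s : Set 𝕜} (hs : Convex ℝ s) (hso : IsOpen s) {f : 𝕜 → 𝕜} (hf : DifferentiableOn 𝕜 f s)
    {C : ℝ} (bound : ∀ x ∈ s, ‖deriv f x + 1‖ ≤ C) {x y : 𝕜} (hx : x ∈ s) (hy : y ∈ s) :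
    ‖f y - f x + (y - x)‖ ≤ C * ‖y - x‖ := by
  have hderiv : ∀ z ∈ s, HasDerivAt (fun w => f w + w) (deriv f z + 1) z := fun z hz =>
    ((hf.differentiableAt (hso.mem_nhds hz)).hasDerivAt).add (hasDerivAt_id z)
  have := hs.norm_image_sub_le_of_norm_deriv_le (fun z hz => (hderiv z hz).differentiableAt)
    (fun z hz => (hderiv z hz).deriv ▸ bound z hz) hx hy
  rwa [add_sub_add_comm] at this

theorem Complex.norm_le_two_mul_abs_re_of_abs_im_le {w : ℂ} (h : |w.im| ≤ |w.re|) :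
    ‖w‖ ≤ 2 * |w.re| := by
  linarith [Complex.norm_le_abs_re_add_abs_im w]

theorem Complex.mul_abs_re_le_re_of_norm_add_le {u w : ℂ} {ε : ℝ} (hε : 0 ≤ ε)
    (hre : w.re < 0) (him : |w.im| ≤ |w.re|) (h : ‖u + w‖ ≤ ε * ‖w‖) :
    (1 - 2 * ε) * |w.re| ≤ u.re := by
  have hnear : -(u + w).re ≤ ε * (2 * |w.re|) := calc
    -(u + w).re ≤ ‖u + w‖ := neg_le.mp (abs_le.mp (Complex.abs_re_le_norm _)).1
    _ ≤ ε * ‖w‖ := h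
    _ ≤ ε * (2 * |w.re|) := by gcongr; exact Complex.norm_le_two_mul_abs_re_of_abs_im_le him
  rw [Complex.add_re, abs_of_neg hre] at *
  linarith

theorem stmt_8 (Q : Set ℂ) (hQo : IsOpen Q) (hQc : Convex ℝ Q)
    (φ : ℂ → ℂ) (hφ : DifferentiableOn ℂ φ Q)
    (ε : ℝ) (hε0 : 0 ≤ ε) (hε : ε < 1/2)
    (hd : ∀ z ∈ Q, ‖deriv φ z + 1‖ ≤ ε)
    (e : ℂ) (he : e ∈ Q) (hφe : φ e = 0) :
    ∀ z ∈ Q, (z - e).re < 0 → |(z - e).im| ≤ |(z - e).re| →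
      (1 - 2 * ε) * |(z - e).re| ≤ (φ z).re ∧ 0 < (φ z).re ∧
      ¬ (0 ≤ (-(φ z)).re ∧ |(-(φ z)).im| ≤ (1/3) * (-(φ z)).re) := by
  intro z hz hre him
  have hclose : ‖φ z + (z - e)‖ ≤ ε * ‖z - e‖ := by
    simpa [hφe] using hQc.norm_sub_add_sub_le_of_norm_deriv_add_one_le hQo hφ hd he hz
  have hlower := Complex.mul_abs_re_le_re_of_norm_add_le hε0 hre him hclose
  have hpos : 0 < (φ z).re :=
    lt_of_lt_of_le (mul_pos (by linarith) (abs_pos.mpr hre.ne)) hlower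
  refine ⟨hlower, hpos, fun ⟨hneg, _⟩ => ?_⟩
  rw [Complex.neg_re] at hneg
  linarith
end

section
/- Let H be a complex Hilbert space, π, π̄ bounded self-adjoint operators with π² + π̄² = 1, T a bounded operator commuting with π and π̄, W bounded, and suppose H_π̄ := T + π̄Wπ̄ is boundedly invertible. Define F := T + πWπ − πWπ̄(H_π̄)^{-1}π̄Wπ. If ψ ∈ H satisfies (T + W)ψ = 0, then φ := πψ satisfies Fφ = 0. -/
/-! Applying `π̄` to `(T + W)ψ = 0` and using `π̄² = 1 - π²` gives `H_π̄ (π̄ψ) = -π̄Wπ (πψ)`, so the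
left inverse `R` recovers `π̄ψ = -R π̄Wπ (πψ)`. Substituting this into `F (πψ)` reassembles
`π (T + W (π² + π̄²)) ψ = π (T + W) ψ = 0`. -/

section FeshbachSchur

variable {A M : Type*} [Ring A] [AddCommGroup M] [Module A M] {π πbar T W R : A}

theorem feshbach_complement_mul_eq (hpart : π * π + πbar * πbar = 1) (hTπbar : T * πbar = πbar * T) :
    (T + πbar * W * πbar) * πbar = πbar * (T + W) - πbar * W * π * π := by
  have hπbar : πbar * πbar = 1 - π * π := eq_sub_of_add_eq' hpart
  calc (T + πbar * W * πbar) * πbar = πbar * T + πbar * W * (πbar * πbar) := by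
        rw [add_mul, hTπbar, mul_assoc (πbar * W)]
    _ = πbar * (T + W) - πbar * W * π * π := by rw [hπbar]; noncomm_ring

theorem feshbach_split_mul_eq (hpart : π * π + πbar * πbar = 1) (hTπ : T * π = π * T) :
    T * π + π * W * π * π + π * W * πbar * πbar = π * (T + W) := by
  calc T * π + π * W * π * π + π * W * πbar * πbar
      = π * T + π * W * (π * π + πbar * πbar) := by rw [hTπ]; noncomm_ring
    _ = π * (T + W) := by rw [hpart]; noncomm_ring

theorem feshbach_inverse_smul_coupling_eq_neg (hpart : π * π + πbar * πbar = 1)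
    (hTπbar : T * πbar = πbar * T) (hR : R * (T + πbar * W * πbar) = 1) {ψ : M}
    (hψ : (T + W) • ψ = 0) :
    R • (πbar * W * π) • π • ψ = -(πbar • ψ) := by
  have hcomplement : (T + πbar * W * πbar) • πbar • ψ = -((πbar * W * π) • π • ψ) := by
    rw [← mul_smul, feshbach_complement_mul_eq hpart hTπbar, sub_smul, mul_smul πbar, hψ, smul_zero,
      zero_sub, mul_smul]
  calc R • (πbar * W * π) • π • ψ = -(R • (T + πbar * W * πbar) • πbar • ψ) := by
        rw [hcomplement, smul_neg, neg_neg]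
    _ = -(πbar • ψ) := by rw [← mul_smul, hR, one_smul]

theorem feshbach_smul_proj_eq_zero (hpart : π * π + πbar * πbar = 1) (hTπ : T * π = π * T)
    (hTπbar : T * πbar = πbar * T) (hR : R * (T + πbar * W * πbar) = 1) {ψ : M}
    (hψ : (T + W) • ψ = 0) :
    (T + π * W * π - π * W * πbar * R * πbar * W * π) • π • ψ = 0 := by
  have hcoupling := feshbach_inverse_smul_coupling_eq_neg hpart hTπbar hR hψ
  calc (T + π * W * π - π * W * πbar * R * πbar * W * π) • π • ψ
      = (T * π + π * W * π * π) • ψ - (π * W * πbar) • R • (πbar * W * π) • π • ψ := by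
        simp only [sub_smul, add_smul, mul_smul]
    _ = (π * (T + W)) • ψ := by
        rw [hcoupling, smul_neg, sub_neg_eq_add, ← mul_smul, ← add_smul, feshbach_split_mul_eq hpart hTπ]
    _ = 0 := by rw [mul_smul, hψ, smul_zero]

end FeshbachSchur

theorem stmt_12_general {H : Type*} [NormedAddCommGroup H] [InnerProductSpace ℂ H]
    (π πbar T W R : H →L[ℂ] H)
    (hpart : π * π + πbar * πbar = 1)
    (hTπ : T * π = π * T) (hTπbar : T * πbar = πbar * T)
    (hR2 : R * (T + πbar * W * πbar) = 1)
    (ψ : H) (hψ : (T + W) ψ = 0) :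
    (T + π * W * π - π * W * πbar * R * πbar * W * π) (π ψ) = 0 :=
  feshbach_smul_proj_eq_zero (M := H) hpart hTπ hTπbar hR2 hψ

theorem stmt_12 {H : Type*} [NormedAddCommGroup H] [InnerProductSpace ℂ H] [CompleteSpace H]
    (π πbar T W R : H →L[ℂ] H)
    (hπ : IsSelfAdjoint π) (hπbar : IsSelfAdjoint πbar)
    (hpart : π * π + πbar * πbar = 1)
    (hTπ : T * π = π * T) (hTπbar : T * πbar = πbar * T)
    (hR1 : (T + πbar * W * πbar) * R = 1) (hR2 : R * (T + πbar * W * πbar) = 1)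
    (ψ : H) (hψ : (T + W) ψ = 0) :
    (T + π * W * π - π * W * πbar * R * πbar * W * π) (π ψ) = 0 :=
  stmt_12_general π πbar T W R hpart hTπ hTπbar hR2 ψ hψ
end
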